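/- In an RRC market in which all colleges share the same priority order over students, i.e., ≻_c = ≻ for every college c, let σ be the linear order of students given by ≻ (the ≻-best student first). Then the serial dictatorship matching SD(σ) is a stable matching. -/

import Mathlib

namespace RRC

section Defs

variable (S C R : Type)

/-- A matching market with resource-regional caps (RRC).  Students `S`, colleges `C`,
non-empty resources `R`; the empty resource `r0` is represented by `none : Option R`. -/
structure Market where
  /-- quota of each college -/
  qC : C → ℕ
  qC_pos : ∀ c, 0 < qC c
  /-- quota of each non-empty resource -/
  qR : R → ℕ
  qR_pos : ∀ r, 0 < qR r
  /-- region of each non-empty resource (the region of `r0` is all of `C`) -/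
  region : R → Finset C
  region_nonempty : ∀ r, (region r).Nonempty
  /-- strict priority order of each college over students -/
  prC : C → S → S → Prop
  prC_sto : ∀ c, IsStrictTotalOrder S (prC c)
  /-- strict preference order of each student over `(C × R0) ∪ {∅}`;
  `none` is the outside option `∅` -/
  prS : S → Option (C × Option R) → Option (C × Option R) → Prop
  prS_sto : ∀ s, IsStrictTotalOrder (Option (C × Option R)) (prS s)

/-- A matching: each student appears in at most one contract, so a matching is a
function from students to optional (college, resource) pairs. -/
abbrev Matching := S → Option (C × Option R)

variable {S C R} [DecidableEq S]

/-- Number of contracts of the college `c` in `μ`. -/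
noncomputable def collegeCount (μ : Matching S C R) (c : C) : ℕ :=
  {s : S | ∃ r, μ s = some (c, r)}.ncard

/-- Number of contracts containing the non-empty resource `r` in `μ`. -/
noncomputable def resourceCount (μ : Matching S C R) (r : R) : ℕ :=
  {s : S | ∃ c, μ s = some (c, some r)}.ncard

/-- Feasibility: college quotas, resource quotas, and regions are respected. -/
def Feasible (M : Market S C R) (μ : Matching S C R) : Prop :=
  (∀ c, collegeCount μ c ≤ M.qC c) ∧
  (∀ r, resourceCount μ r ≤ M.qR r) ∧
  (∀ s c r, μ s = some (c, some r) → c ∈ M.region r)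

/-- A pair `(c, r)` is acceptable for `s` if `s` prefers it to being unmatched. -/
def Acceptable (M : Market S C R) (s : S) (c : C) (r : Option R) : Prop :=
  M.prS s (some (c, r)) none

/-- Individual rationality: no unacceptable contract is used. -/
def IndRational (M : Market S C R) (μ : Matching S C R) : Prop :=
  ∀ s x, μ s = some x → M.prS s (some x) none

/-- The contract `(s, c, r) ∉ μ` envy-blocks `μ` through `(s', c, r') ∈ μ`. -/
def EnvyBlocksThrough (M : Market S C R) (μ : Matching S C R)
    (s : S) (c : C) (r : Option R) (s' : S) (r' : Option R) : Prop :=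
  μ s ≠ some (c, r) ∧ μ s' = some (c, r') ∧
  M.prS s (some (c, r)) (μ s) ∧ M.prC c s s' ∧
  Feasible M (Function.update (Function.update μ s' none) s (some (c, r)))

def EnvyBlocks (M : Market S C R) (μ : Matching S C R)
    (s : S) (c : C) (r : Option R) : Prop :=
  ∃ s' r', EnvyBlocksThrough M μ s c r s' r'

def EnvyFree (M : Market S C R) (μ : Matching S C R) : Prop :=
  ∀ s c r, ¬ EnvyBlocks M μ s c r

/-- The contract `(s, c, r) ∉ μ` waste-blocks `μ`. -/
def WasteBlocks (M : Market S C R) (μ : Matching S C R)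
    (s : S) (c : C) (r : Option R) : Prop :=
  μ s ≠ some (c, r) ∧ M.prS s (some (c, r)) (μ s) ∧
  Feasible M (Function.update μ s (some (c, r)))

def NonWasteful (M : Market S C R) (μ : Matching S C R) : Prop :=
  ∀ s c r, ¬ WasteBlocks M μ s c r

/-- Stability: feasible, individually rational, no envy-blocking and no
waste-blocking contract. -/
def Stable (M : Market S C R) (μ : Matching S C R) : Prop :=
  Feasible M μ ∧ IndRational M μ ∧ EnvyFree M μ ∧ NonWasteful M μ

/-- `(s, c, r)` direct-envy-blocks `μ`: it envy-blocks through some `(s', c, r')`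
with `r ∈ {r', r0}`. -/
def DirectEnvyBlocks (M : Market S C R) (μ : Matching S C R)
    (s : S) (c : C) (r : Option R) : Prop :=
  ∃ s' r', EnvyBlocksThrough M μ s c r s' r' ∧ (r = r' ∨ r = none)

/-- The waste-blocking contract `(s, c, r)` is dominated by `(s', c, r') ∉ μ`. -/
def Dominates (M : Market S C R) (μ : Matching S C R)
    (s : S) (c : C) (r : Option R) (s' : S) (r' : Option R) : Prop :=
  μ s' ≠ some (c, r') ∧
  ¬ WasteBlocks M μ s' c r' ∧ ¬ DirectEnvyBlocks M μ s' c r' ∧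
  DirectEnvyBlocks M (Function.update μ s (some (c, r))) s' c r'

/-- Direct-envy stability: feasible, individually rational, no direct-envy-blocking
contract, and every waste-blocking contract is dominated. -/
def DirectEnvyStable (M : Market S C R) (μ : Matching S C R) : Prop :=
  Feasible M μ ∧ IndRational M μ ∧
  (∀ s c r, ¬ DirectEnvyBlocks M μ s c r) ∧
  (∀ s c r, WasteBlocks M μ s c r → ∃ s' r', Dominates M μ s c r s' r')

/-- Weak stability: no direct-envy-blocking contract, and every waste-blocking
contract involves a non-empty resource whose quota is fully used. -/
def WeaklyStable (M : Market S C R) (μ : Matching S C R) : Prop :=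
  Feasible M μ ∧ IndRational M μ ∧
  (∀ s c r, ¬ DirectEnvyBlocks M μ s c r) ∧
  (∀ s c (r : Option R), WasteBlocks M μ s c r →
    ∃ r₁, r = some r₁ ∧ resourceCount μ r₁ = M.qR r₁)

/-- A waste-blocking contract is resource-blocking if the student is already
admitted to the same college. -/
def ResourceBlocks (M : Market S C R) (μ : Matching S C R)
    (s : S) (c : C) (r : Option R) : Prop :=
  WasteBlocks M μ s c r ∧ ∃ r', μ s = some (c, r')

/-- A waste-blocking contract is seat-blocking if the student is not admitted to
the same college. -/
def SeatBlocks (M : Market S C R) (μ : Matching S C R)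
    (s : S) (c : C) (r : Option R) : Prop :=
  WasteBlocks M μ s c r ∧ ¬ ∃ r', μ s = some (c, r')

def ResourceEfficient (M : Market S C R) (μ : Matching S C R) : Prop :=
  ∀ s c r, ¬ ResourceBlocks M μ s c r

def SeatEfficient (M : Market S C R) (μ : Matching S C R) : Prop :=
  ∀ s c r, ¬ SeatBlocks M μ s c r

end Defs

section Cutoffs

variable {S C R : Type} [Fintype S]

/-- A cutoff profile: one cutoff per (college, resource) pair, bounded by the
number of students, with the cutoff for the empty resource the largest. -/
def IsCutoffProfile (St : Type) [Fintype St] {Co Re : Type}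
    (K : Co → Option Re → ℕ) : Prop :=
  (∀ c r, K c r ≤ Fintype.card St) ∧ ∀ c (r : Re), K c (some r) ≤ K c none

/-- Rank of student `s` in the priority order of college `c` (0 = best). -/
noncomputable def studentRank (M : Market S C R) (c : C) (s : S) : ℕ :=
  {s' : S | M.prC c s' s}.ncard

/-- `(s, c, r)` is permitted by the cutoff profile `K` if `s` is among the top
`K c r` students of `c`'s priority order. -/
noncomputable def Permitted (M : Market S C R) (K : C → Option R → ℕ)
    (s : S) (c : C) (r : Option R) : Prop :=
  studentRank M c s < K c r

/-- `μ` is the matching induced by the cutoff profile `K`: every student gets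
their most preferred acceptable permitted contract, if any. -/
def IsInduced (M : Market S C R) (K : C → Option R → ℕ) (μ : Matching S C R) : Prop :=
  ∀ s : S,
    (∀ c r, μ s = some (c, r) →
      Permitted M K s c r ∧ Acceptable M s c r ∧
      ∀ c' r', Permitted M K s c' r' → Acceptable M s c' r' →
        (c', r') ≠ (c, r) → M.prS s (some (c, r)) (some (c', r'))) ∧
    (μ s = none → ∀ c r, ¬ (Permitted M K s c r ∧ Acceptable M s c r))

/-- `K + 1_r^c`: increase the cutoff of `(c, r)` by one (simultaneously increasing
the cutoff of `(c, r0)` if it was equal to that of `(c, r)`). -/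
def bump [DecidableEq C] [DecidableEq R] (K : C → Option R → ℕ)
    (c : C) (r : Option R) : C → Option R → ℕ :=
  fun c' r' =>
    if c' = c ∧ (r' = r ∨ (r' = none ∧ r ≠ none ∧ K c none = K c r)) then K c' r' + 1
    else K c' r'

/-- An optimal cutoff profile: the induced matching is feasible, and increasing any
non-maximal cutoff yields an infeasible induced matching. -/
def OptimalCutoffs [DecidableEq C] [DecidableEq R]
    (M : Market S C R) (K : C → Option R → ℕ) : Prop :=
  IsCutoffProfile S K ∧
  (∀ μ, IsInduced M K μ → Feasible M μ) ∧
  ∀ c r, K c r < Fintype.card S →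
    ∀ μ', IsInduced M (bump K c r) μ' → ¬ Feasible M μ'

end Cutoffs

section SD

variable {S C R : Type} [DecidableEq S]

/-- `x` is the most preferred contract of the (unmatched) student `s` given the
current matching `μ`: the best acceptable contract keeping the matching feasible,
or `none` if there is no such contract. -/
def BestChoice (M : Market S C R) (μ : Matching S C R) (s : S)
    (x : Option (C × Option R)) : Prop :=
  match x with
  | some (c, r) =>
      Acceptable M s c r ∧ Feasible M (Function.update μ s (some (c, r))) ∧
      ∀ c' r', Acceptable M s c' r' → Feasible M (Function.update μ s (some (c', r'))) →
        (c', r') = (c, r) ∨ M.prS s (some (c, r)) (some (c', r'))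
  | none => ∀ c r, ¬ (Acceptable M s c r ∧ Feasible M (Function.update μ s (some (c, r))))

/-- A run of the serial dictatorship mechanism on a list of students:
`SDRun M l μ μ'` holds if starting from `μ` and processing the students of `l`
in order, each one receiving their most preferred feasible acceptable contract,
yields `μ'`. -/
inductive SDRun (M : Market S C R) : List S → Matching S C R → Matching S C R → Prop
  | nil (μ : Matching S C R) : SDRun M [] μ μ
  | cons (s : S) (l : List S) (μ : Matching S C R) (x : Option (C × Option R))
      (μ' : Matching S C R) (hx : BestChoice M μ s x)
      (h : SDRun M l (Function.update μ s x) μ') : SDRun M (s :: l) μ μ'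

/-- Student `s` weakly prefers `x` to `y`. -/
def WeaklyPrefers (M : Market S C R) (s : S) (x y : Option (C × Option R)) : Prop :=
  x = y ∨ M.prS s x y

/-- Pareto efficiency for students. -/
def ParetoEfficient (M : Market S C R) (μ : Matching S C R) : Prop :=
  ¬ ∃ μ' : Matching S C R, Feasible M μ' ∧
    (∀ s, WeaklyPrefers M s (μ' s) (μ s)) ∧ ∃ s, M.prS s (μ' s) (μ s)

end SD

/-- A strict total order induced by an injective rank function (rank 0 = best). -/
lemma isStrictTotalOrder_of_rank {α : Type*} (f : α → ℕ) (hf : Function.Injective f) :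
    IsStrictTotalOrder α (fun x y => f x < f y) where
  trichotomous a b := by
    intro h1 h2
    exact hf (le_antisymm (not_lt.mp h2) (not_lt.mp h1))
  irrefl a := lt_irrefl (f a)
  trans a b c h1 h2 := lt_trans h1 h2

end RRC

/-! Students are processed best-first, so at the turn of `s` the current matching consists of
the final contracts of the students of higher priority than `s`. A blocking contract `(s, c, r)`
comes with a feasible matching that contains this partial matching together with `(s, c, r)`;
hence `(s, c, r)` was still available to `s` at that turn, and `s` did not prefer it to the
contract `s` chose. -/

namespace RRC

variable {S C R : Type} {M : Market S C R}

theorem indRational_empty : IndRational M (fun _ => none) := by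
  simp [IndRational]

theorem not_prefers_of_weaklyPrefers {s : S} {x y : Option (C × Option R)}
    (h : WeaklyPrefers M s x y) : ¬ M.prS s y x := by
  have := M.prS_sto s
  rcases h with rfl | h
  · exact irrefl x
  · exact asymm h

theorem acceptable_of_prefers {μ : Matching S C R} (hμ : IndRational M μ) {s : S} {c : C}
    {r : Option R} (h : M.prS s (some (c, r)) (μ s)) : Acceptable M s c r := by
  have := M.prS_sto s
  cases hs : μ s with
  | none => rwa [hs] at h
  | some x => exact _root_.trans (hs ▸ h : M.prS s (some (c, r)) (some x)) (hμ s x hs)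

def IsSubmatching (ν ν' : Matching S C R) : Prop :=
  ∀ t x, ν t = some x → ν' t = some x

theorem Feasible.of_isSubmatching [Finite S] {ν ν' : Matching S C R}
    (hsub : IsSubmatching ν ν') (h : Feasible M ν') : Feasible M ν := by
  obtain ⟨hC, hR, hreg⟩ := h
  refine ⟨fun c => (Set.ncard_le_ncard ?_ (Set.toFinite _)).trans (hC c),
    fun r => (Set.ncard_le_ncard ?_ (Set.toFinite _)).trans (hR r),
    fun s c r hs => hreg s c r (hsub s _ hs)⟩
  · rintro t ⟨r, ht⟩
    exact ⟨r, hsub t _ ht⟩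
  · rintro t ⟨c, ht⟩
    exact ⟨c, hsub t _ ht⟩

theorem feasible_empty : Feasible M (fun _ => none) :=
  ⟨fun _ => by simp [collegeCount], fun _ => by simp [resourceCount], by simp⟩

variable [DecidableEq S]

theorem isSubmatching_update_none (μ : Matching S C R) (s : S) :
    IsSubmatching (Function.update μ s none) μ := by
  intro t x ht
  by_cases hts : t = s
  · simp [hts] at ht
  · rwa [Function.update_of_ne hts] at ht

theorem BestChoice.feasible_update [Finite S] {μ : Matching S C R} {s : S}
    {x : Option (C × Option R)} (hx : BestChoice M μ s x) (hμ : Feasible M μ) :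
    Feasible M (Function.update μ s x) := by
  match x, hx with
  | some _, hx => exact hx.2.1
  | none, _ => exact hμ.of_isSubmatching (isSubmatching_update_none μ s)

theorem BestChoice.indRational_update {μ : Matching S C R} {s : S}
    {x : Option (C × Option R)} (hx : BestChoice M μ s x) (hμ : IndRational M μ) :
    IndRational M (Function.update μ s x) := by
  intro t y ht
  by_cases hts : t = s
  · subst hts
    rw [Function.update_self] at ht
    subst ht
    exact hx.1
  · exact hμ t y (by rwa [Function.update_of_ne hts] at ht)

namespace SDRun

variable {l : List S} {μ₀ μ : Matching S C R}

theorem feasible [Finite S] (h : SDRun M l μ₀ μ) (h₀ : Feasible M μ₀) : Feasible M μ := by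
  induction h with
  | nil => exact h₀
  | cons _ _ _ _ _ hx _ ih => exact ih (hx.feasible_update h₀)

theorem indRational (h : SDRun M l μ₀ μ) (h₀ : IndRational M μ₀) : IndRational M μ := by
  induction h with
  | nil => exact h₀
  | cons _ _ _ _ _ hx _ ih => exact ih (hx.indRational_update h₀)

theorem apply_of_notMem (h : SDRun M l μ₀ μ) {t : S} (ht : t ∉ l) : μ t = μ₀ t := by
  induction h with
  | nil => rfl
  | cons s l μ₀ x μ _ _ ih =>
    rw [List.mem_cons, not_or] at ht
    rw [ih ht.2, Function.update_of_ne ht.1]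

theorem append_cons {l₁ l₂ : List S} {s : S} (h : SDRun M (l₁ ++ s :: l₂) μ₀ μ) :
    ∃ μt x, SDRun M l₁ μ₀ μt ∧ BestChoice M μt s x ∧
      SDRun M l₂ (Function.update μt s x) μ := by
  induction l₁ generalizing μ₀ with
  | nil =>
    cases h with
    | cons _ _ _ x _ hx h => exact ⟨μ₀, x, nil μ₀, hx, h⟩
  | cons a l₁ ih =>
    cases h with
    | cons _ _ _ y _ hy h =>
      obtain ⟨μt, x, h₁, hx, h₂⟩ := ih h
      exact ⟨μt, x, cons a l₁ μ₀ y μt hy h₁, hx, h₂⟩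

theorem bestChoice {l₁ l₂ : List S} {s : S} (h : SDRun M (l₁ ++ s :: l₂) μ₀ μ)
    (hnd : (l₁ ++ s :: l₂).Nodup) :
    BestChoice M (fun t => if t ∈ l₁ then μ t else μ₀ t) s (μ s) := by
  obtain ⟨μt, x, h₁, hx, h₂⟩ := h.append_cons
  rw [List.nodup_append, List.nodup_cons] at hnd
  obtain ⟨-, ⟨hs₂, -⟩, hdisj⟩ := hnd
  have hturn : (fun t => if t ∈ l₁ then μ t else μ₀ t) = μt := by
    funext t
    split_ifs with ht
    · have hts : t ≠ s := fun hts => hdisj t ht s List.mem_cons_self hts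
      have ht₂ : t ∉ l₂ := fun ht₂ => hdisj t ht t (List.mem_cons_of_mem s ht₂) rfl
      rw [h₂.apply_of_notMem ht₂, Function.update_of_ne hts]
    · exact (h₁.apply_of_notMem ht).symm
  rwa [hturn, h₂.apply_of_notMem hs₂, Function.update_self]

theorem weaklyPrefers_of_feasible [Finite S] {l₁ l₂ : List S} {s : S}
    (h : SDRun M (l₁ ++ s :: l₂) (fun _ => none) μ) (hnd : (l₁ ++ s :: l₂).Nodup)
    {ν : Matching S C R} (hν : Feasible M ν) {c : C} {r : Option R}
    (hνs : ν s = some (c, r)) (hacc : Acceptable M s c r) (hpre : ∀ t ∈ l₁, ν t = μ t) :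
    WeaklyPrefers M s (μ s) (some (c, r)) := by
  have hbest := h.bestChoice hnd
  have hfeas : Feasible M (Function.update (fun t => if t ∈ l₁ then μ t else none) s
      (some (c, r))) := by
    refine hν.of_isSubmatching fun t y ht => ?_
    by_cases hts : t = s
    · subst hts
      rwa [Function.update_self, ← hνs] at ht
    · rw [Function.update_of_ne hts] at ht
      split_ifs at ht with htl
      rwa [hpre t htl]
  cases hs : μ s with
  | none =>
    rw [hs] at hbest
    exact absurd ⟨hacc, hfeas⟩ (hbest c r)
  | some x =>
    rw [hs] at hbest
    rcases hbest.2.2 c r hacc hfeas with heq | hlt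
    · exact Or.inl (by rw [heq])
    · exact Or.inr hlt

theorem not_prefers_of_feasible [Finite S] {pr : S → S → Prop}
    (h : SDRun M l (fun _ => none) μ) (hnd : l.Nodup) (hsorted : l.Pairwise pr)
    {s : S} (hs : s ∈ l) {ν : Matching S C R} (hν : Feasible M ν) {c : C} {r : Option R}
    (hνs : ν s = some (c, r)) (hpred : ∀ t ≠ s, pr t s → ν t = μ t) :
    ¬ M.prS s (some (c, r)) (μ s) := by
  intro hpref
  obtain ⟨l₁, l₂, rfl⟩ := List.append_of_mem hs
  have hacc := acceptable_of_prefers (h.indRational indRational_empty) hpref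
  refine not_prefers_of_weaklyPrefers
    (h.weaklyPrefers_of_feasible hnd hν hνs hacc fun t ht => ?_) hpref
  have hts : t ≠ s := fun hts => (List.nodup_append.mp hnd).2.2 t ht s List.mem_cons_self hts
  exact hpred t hts ((List.pairwise_append.mp hsorted).2.2 t ht s List.mem_cons_self)

end SDRun

theorem serialDictatorship_stable_of_aligned_colleges_general
    {S C R : Type} [Fintype S] [DecidableEq S]
    (M : Market S C R) (pr : S → S → Prop) (haligned : ∀ c, M.prC c = pr)
    (l : List S) (hnd : l.Nodup) (hall : ∀ s, s ∈ l) (hsorted : l.Pairwise pr)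
    (μ : Matching S C R) (h : SDRun M l (fun _ => none) μ) :
    Stable M μ := by
  refine ⟨h.feasible feasible_empty, h.indRational indRational_empty, ?_, ?_⟩
  · rintro s c r ⟨s', r', -, -, hpref, hprio, hfeas⟩
    have := haligned c ▸ M.prC_sto c
    rw [haligned] at hprio
    refine h.not_prefers_of_feasible hnd hsorted (hall s) hfeas (Function.update_self ..)
      (fun t hts hpr => ?_) hpref
    have hts' : t ≠ s' := by
      rintro rfl
      exact asymm hprio hpr
    rw [Function.update_of_ne hts, Function.update_of_ne hts']
  · rintro s c r ⟨-, hpref, hfeas⟩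
    exact h.not_prefers_of_feasible hnd hsorted (hall s) hfeas (Function.update_self ..)
      (fun t hts _ => Function.update_of_ne hts _ _) hpref

/-- If all colleges share the same priority order `pr` over students
and the students are processed in the order given by `pr` (best student first), then
the serial dictatorship matching is stable. -/
theorem serialDictatorship_stable_of_aligned_colleges
    {S C R : Type} [Fintype S] [DecidableEq S] [Fintype C] [DecidableEq C]
    [Fintype R] [DecidableEq R]
    (M : Market S C R) (pr : S → S → Prop) (haligned : ∀ c, M.prC c = pr)
    (l : List S) (hnd : l.Nodup) (hall : ∀ s, s ∈ l) (hsorted : l.Pairwise pr)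
    (μ : Matching S C R) (h : SDRun M l (fun _ => none) μ) :
    Stable M μ :=
  serialDictatorship_stable_of_aligned_colleges_general M pr haligned l hnd hall hsorted μ h

end RRC
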